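/- arXiv:1608.01662 — 4 statements merged into one kernel-verified Lean document; each statement's English description precedes it below -/
import Mathlib

section
/- The series \sum_{n=1}^{\infty} 1/a_n^2 converges if and only if p > 3/4. -/
/-!
Writing `q = 2p - 1`, we have `a (n + 1) = ∏_{j ≤ n} (1 + q / j)`. For `0 ≤ q ≤ 1`, Bernoulli's
inequality `(1 + 1/(n+1))^q ≤ 1 + q/(n+1)` gives `(n + 1)^q ≤ a (n + 1)` by induction, and
`1 + x ≤ exp x` together with `H_n ≤ 1 + log (n + 1)` gives `a (n + 1) ≤ e^q (n + 1)^q`.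
So `1 / a (n + 1)^2` is comparable to `(n + 1)^(-2q)`, summable iff `q > 1/2`. Since the product
is increasing in `q`, negative `q` reduce to `q = 1/2`.
-/

open Finset

noncomputable def prodOneAddDiv (q : ℝ) (n : ℕ) : ℝ :=
  ∏ j ∈ Icc 1 n, (1 + q / (j : ℝ))

lemma summable_one_div_natCast_add_one_rpow_iff {s : ℝ} :
    Summable (fun n : ℕ => 1 / ((n : ℝ) + 1) ^ s) ↔ 1 < s := by
  simpa using (summable_nat_add_iff 1 (f := fun n : ℕ => 1 / (n : ℝ) ^ s)).trans
    Real.summable_one_div_nat_rpow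

lemma one_add_div_natCast_pos {q : ℝ} (hq : -1 < q) {j : ℕ} (hj : 1 ≤ j) :
    0 < 1 + q / (j : ℝ) := by
  have hj' : (1 : ℝ) ≤ j := by exact_mod_cast hj
  rw [show 1 + q / (j : ℝ) = (j + q) / j by field_simp]
  exact div_pos (by linarith) (by linarith)

namespace prodOneAddDiv

variable {q : ℝ}

lemma pos (hq : -1 < q) (n : ℕ) : 0 < prodOneAddDiv q n :=
  prod_pos fun _ hj => one_add_div_natCast_pos hq (mem_Icc.mp hj).1

lemma succ (q : ℝ) (n : ℕ) :
    prodOneAddDiv q (n + 1) = prodOneAddDiv q n * (1 + q / ((n : ℝ) + 1)) := by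
  rw [prodOneAddDiv, prod_Icc_succ_top (by omega), Nat.cast_succ, prodOneAddDiv]

lemma mono (hq : -1 < q) {q' : ℝ} (hqq' : q ≤ q') (n : ℕ) :
    prodOneAddDiv q n ≤ prodOneAddDiv q' n := by
  refine prod_le_prod (fun j hj => (one_add_div_natCast_pos hq (mem_Icc.mp hj).1).le)
    fun _ _ => ?_
  gcongr

lemma add_one_rpow_le (hq0 : 0 ≤ q) (hq1 : q ≤ 1) (n : ℕ) :
    ((n : ℝ) + 1) ^ q ≤ prodOneAddDiv q n := by
  induction n with
  | zero => simp [prodOneAddDiv]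
  | succ n ih =>
    have hn : (0 : ℝ) < n + 1 := by positivity
    have bernoulli : (1 + 1 / ((n : ℝ) + 1)) ^ q ≤ 1 + q * (1 / ((n : ℝ) + 1)) :=
      rpow_one_add_le_one_add_mul_self (by linarith [one_div_pos.mpr hn]) hq0 hq1
    have split : ((n + 1 : ℕ) : ℝ) + 1 = ((n : ℝ) + 1) * (1 + 1 / ((n : ℝ) + 1)) := by
      push_cast; field_simp
    calc (((n + 1 : ℕ) : ℝ) + 1) ^ q = ((n : ℝ) + 1) ^ q * (1 + 1 / ((n : ℝ) + 1)) ^ q := by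
            rw [split, Real.mul_rpow hn.le (by positivity)]
      _ ≤ prodOneAddDiv q n * (1 + q / ((n : ℝ) + 1)) := by
            rw [mul_one_div] at bernoulli
            gcongr
            exact (pos (by linarith) n).le
      _ = prodOneAddDiv q (n + 1) := (succ q n).symm

lemma le_exp_mul_harmonic (hq : -1 < q) (n : ℕ) :
    prodOneAddDiv q n ≤ Real.exp (q * harmonic n) := by
  calc prodOneAddDiv q n ≤ ∏ j ∈ Icc 1 n, Real.exp (q / j) :=
        prod_le_prod (fun j hj => (one_add_div_natCast_pos hq (mem_Icc.mp hj).1).le)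
          fun _ _ => by rw [add_comm]; exact Real.add_one_le_exp _
    _ = Real.exp (q * harmonic n) := by
        rw [← Real.exp_sum, harmonic_eq_sum_Icc]
        push_cast
        simp only [mul_sum, div_eq_mul_inv]

lemma le_exp_mul_rpow (hq : 0 ≤ q) (n : ℕ) :
    prodOneAddDiv q n ≤ Real.exp q * ((n : ℝ) + 1) ^ q := by
  have harmonic_le : (harmonic n : ℝ) ≤ 1 + Real.log ((n : ℝ) + 1) := by
    refine (harmonic_le_one_add_log n).trans ?_
    rcases n.eq_zero_or_pos with rfl | hn
    · simp
    · gcongr; linarith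
  calc prodOneAddDiv q n ≤ Real.exp (q * harmonic n) := le_exp_mul_harmonic (by linarith) n
    _ ≤ Real.exp (q * (1 + Real.log ((n : ℝ) + 1))) := by gcongr
    _ = Real.exp q * ((n : ℝ) + 1) ^ q := by
        rw [Real.rpow_def_of_pos (by positivity), mul_add, Real.exp_add, mul_one, mul_comm q]

lemma summable_one_div_sq_iff_of_nonneg (hq0 : 0 ≤ q) (hq1 : q ≤ 1) :
    Summable (fun n => 1 / prodOneAddDiv q n ^ 2) ↔ 1 / 2 < q := by
  have sq_rpow (n : ℕ) : (((n : ℝ) + 1) ^ q) ^ 2 = ((n : ℝ) + 1) ^ (2 * q) := by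
    rw [← Real.rpow_natCast, ← Real.rpow_mul (by positivity), mul_comm]
    norm_num
  rw [show 1 / 2 < q ↔ 1 < 2 * q by constructor <;> intro <;> linarith,
    ← summable_one_div_natCast_add_one_rpow_iff]
  constructor
  · intro h
    refine (h.mul_left (Real.exp q ^ 2)).of_nonneg_of_le (fun n => by positivity) fun n => ?_
    calc 1 / ((n : ℝ) + 1) ^ (2 * q)
        = Real.exp q ^ 2 * (1 / (Real.exp q * ((n : ℝ) + 1) ^ q) ^ 2) := by
          rw [mul_pow, sq_rpow]; field_simp
      _ ≤ Real.exp q ^ 2 * (1 / prodOneAddDiv q n ^ 2) := by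
          have hP : 0 < prodOneAddDiv q n := pos (by linarith) n
          gcongr
          exact le_exp_mul_rpow hq0 n
  · intro h
    refine h.of_nonneg_of_le (fun n => by positivity) fun n => ?_
    rw [← sq_rpow]
    gcongr
    exact add_one_rpow_le hq0 hq1 n

lemma summable_one_div_sq_iff (hq : -1 < q) (hq1 : q ≤ 1) :
    Summable (fun n => 1 / prodOneAddDiv q n ^ 2) ↔ 1 / 2 < q := by
  refine ⟨fun h => ?_, fun hq2 => (summable_one_div_sq_iff_of_nonneg (by linarith) hq1).2 hq2⟩
  by_contra! hq2
  have not_summable_half := (summable_one_div_sq_iff_of_nonneg (q := 1 / 2) (by norm_num)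
    (by norm_num)).not.2 (lt_irrefl _)
  refine not_summable_half (h.of_nonneg_of_le (fun n => by positivity) fun n => ?_)
  have hP : 0 < prodOneAddDiv q n := pos hq n
  gcongr
  exact mono hq hq2 n

end prodOneAddDiv

theorem stmt3 (p : ℝ) (hp0 : 0 < p) (hp1 : p ≤ 1) (a : ℕ → ℝ)
    (ha : ∀ n, 1 ≤ n → a n = ∏ j ∈ Finset.Icc 1 (n - 1), (1 + (2 * p - 1) / (j : ℝ))) :
    (Summable fun n : ℕ => 1 / (a (n + 1)) ^ 2) ↔ 3 / 4 < p := by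
  have a_succ (n : ℕ) : a (n + 1) = prodOneAddDiv (2 * p - 1) n := ha (n + 1) (by omega)
  simp only [a_succ]
  rw [prodOneAddDiv.summable_one_div_sq_iff (by linarith) (by linarith)]
  constructor <;> intro <;> linarith
end

section
/- For the elephant random walk, E[X_n] = (2q-1) \Gamma(n + 2p - 1)/(\Gamma(2p)\Gamma(n)) for all n \ge 1. -/
open Finset Filter MeasureTheory

/-! Taking expectations in the conditional-mean identity gives the linear recursion
`n E[X_{n+1}] = (n + 2p - 1) E[X_n]`, and `Γ(n + 2p - 1) / Γ(n)` solves the same recursion. -/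

theorem eq_Gamma_ratio_of_mul_succ {b c : ℝ} (hb : 0 < b) {e : ℕ → ℝ} (h1 : e 1 = c)
    (hsucc : ∀ n, 1 ≤ n → n * e (n + 1) = (n + b - 1) * e n) :
    ∀ n, 1 ≤ n → e n = c * Real.Gamma (n + b - 1) / (Real.Gamma b * Real.Gamma n) := by
  have hΓb : Real.Gamma b ≠ 0 := (Real.Gamma_pos_of_pos hb).ne'
  intro n hn
  induction n, hn using Nat.le_induction with
  | base => simp [h1, hΓb]
  | succ n hn ih =>
    have hn1 : (1 : ℝ) ≤ n := by exact_mod_cast hn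
    have hn' : (0 : ℝ) < n := by linarith
    have hΓn : Real.Gamma ((n : ℝ) + 1) = n * Real.Gamma n := Real.Gamma_add_one hn'.ne'
    have hΓnb : Real.Gamma ((n : ℝ) + 1 + b - 1) = (n + b - 1) * Real.Gamma (n + b - 1) := by
      rw [add_right_comm, add_sub_right_comm, Real.Gamma_add_one (by linarith)]
    have hΓn_ne : Real.Gamma (n : ℝ) ≠ 0 := (Real.Gamma_pos_of_pos hn').ne'
    have hstep : e (n + 1) = (n + b - 1) / n * e n := by
      rw [div_mul_eq_mul_div, eq_div_iff hn'.ne', mul_comm, hsucc n hn]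
    rw [hstep, ih, Nat.cast_succ, hΓnb, hΓn]
    field_simp

theorem integrable_of_eq_one_or_neg_one {Ω : Type*} {m0 : MeasurableSpace Ω} {μ : Measure Ω}
    [IsFiniteMeasure μ] {f : Ω → ℝ} (hf : AEStronglyMeasurable f μ)
    (hval : ∀ ω, f ω = 1 ∨ f ω = -1) : Integrable f μ :=
  Integrable.of_bound hf 1 <| Eventually.of_forall fun ω => by rcases hval ω with h | h <;> simp [h]

theorem integral_eq_of_condExp_ae_eq {Ω : Type*} {m m0 : MeasurableSpace Ω} {μ : Measure Ω}
    [IsFiniteMeasure μ] (hm : m ≤ m0) {f g : Ω → ℝ} (h : μ[f | m] =ᵐ[μ] g) :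
    ∫ ω, f ω ∂μ = ∫ ω, g ω ∂μ := by
  rw [← integral_condExp hm, integral_congr_ae h]

theorem stmt9_general {Ω : Type*} {m0 : MeasurableSpace Ω} (μ : Measure Ω) [IsProbabilityMeasure μ]
    (ℱ : Filtration ℕ m0) (p q : ℝ) (hp0 : 0 < p)
    (η : ℕ → Ω → ℝ)
    (hval : ∀ n, 1 ≤ n → ∀ ω, η n ω = 1 ∨ η n ω = -1)
    (hadapt : ∀ n, 1 ≤ n → StronglyMeasurable[ℱ n] (η n))
    (hη1 : ∫ ω, η 1 ω ∂μ = 2 * q - 1)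
    (hcond : ∀ n, 1 ≤ n →
      μ[η (n + 1) | ℱ n] =ᵐ[μ] fun ω => (2 * p - 1) * (∑ k ∈ Finset.Icc 1 n, η k ω) / n)
    (X : ℕ → Ω → ℝ) (hX : ∀ n ω, X n ω = ∑ k ∈ Finset.Icc 1 n, η k ω) :
    ∀ n, 1 ≤ n →
      ∫ ω, X n ω ∂μ =
        (2 * q - 1) * Real.Gamma ((n : ℝ) + 2 * p - 1) / (Real.Gamma (2 * p) * Real.Gamma n) := by
  have hηint : ∀ k, 1 ≤ k → Integrable (η k) μ := fun k hk =>
    integrable_of_eq_one_or_neg_one ((hadapt k hk).mono (ℱ.le k)).aestronglyMeasurable (hval k hk)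
  have hX_eq : X = fun n ω => ∑ k ∈ Finset.Icc 1 n, η k ω := funext₂ hX
  subst hX_eq
  refine eq_Gamma_ratio_of_mul_succ (by positivity) (by simpa using hη1) fun n hn => ?_
  have hn' : (n : ℝ) ≠ 0 := by positivity
  have hmean : ∫ ω, η (n + 1) ω ∂μ = (2 * p - 1) / n * ∫ ω, ∑ k ∈ Finset.Icc 1 n, η k ω ∂μ := by
    rw [integral_eq_of_condExp_ae_eq (ℱ.le n) (hcond n hn), integral_div, integral_const_mul]
    ring
  have hsplit : ∫ ω, ∑ k ∈ Finset.Icc 1 (n + 1), η k ω ∂μ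
      = ∫ ω, ∑ k ∈ Finset.Icc 1 n, η k ω ∂μ + ∫ ω, η (n + 1) ω ∂μ := by
    simp_rw [Finset.sum_Icc_succ_top (Nat.le_add_left 1 n)]
    exact integral_add (integrable_finsetSum _ fun k hk => hηint k (Finset.mem_Icc.1 hk).1)
      (hηint (n + 1) (Nat.le_add_left 1 n))
  rw [hsplit, hmean]
  field_simp
  ring

theorem stmt9 {Ω : Type*} {m0 : MeasurableSpace Ω} (μ : Measure Ω) [IsProbabilityMeasure μ]
    (ℱ : Filtration ℕ m0) (p q : ℝ) (hp0 : 0 < p) (hp1 : p ≤ 1) (hq : q ∈ Set.Icc (0 : ℝ) 1)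
    (η : ℕ → Ω → ℝ)
    (hval : ∀ n, 1 ≤ n → ∀ ω, η n ω = 1 ∨ η n ω = -1)
    (hadapt : ∀ n, 1 ≤ n → StronglyMeasurable[ℱ n] (η n))
    (hη1 : ∫ ω, η 1 ω ∂μ = 2 * q - 1)
    (hcond : ∀ n, 1 ≤ n →
      μ[η (n + 1) | ℱ n] =ᵐ[μ] fun ω => (2 * p - 1) * (∑ k ∈ Finset.Icc 1 n, η k ω) / n)
    (X : ℕ → Ω → ℝ) (hX : ∀ n ω, X n ω = ∑ k ∈ Finset.Icc 1 n, η k ω) :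
    ∀ n, 1 ≤ n →
      ∫ ω, X n ω ∂μ =
        (2 * q - 1) * Real.Gamma ((n : ℝ) + 2 * p - 1) / (Real.Gamma (2 * p) * Real.Gamma n) :=
  stmt9_general μ ℱ p q hp0 η hval hadapt hη1 hcond X hX
end

section
/- (Strong law of large numbers for the ERW) For every p \in [0,1) and q \in [0,1], (X_n - E[X_n])/n \to 0 almost surely as n \to \infty. -/
/-!
Write `α = 2p - 1` and `Dₙ = Xₙ - 𝔼 Xₙ`. Taking expectations in the defining relation gives
`𝔼 Xₙ₊₁ = (1 + α/n) 𝔼 Xₙ`, hence `Dₙ₊₁ = (1 + α/n) Dₙ + εₙ₊₁` with the martingale difference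
`εₙ₊₁ = ηₙ₊₁ - α Xₙ / n`, which is bounded by `2`. Thus `yₙ = Dₙ / n` satisfies
`yₙ₊₁ = (1 - (1 - α)/(n + 1)) yₙ + εₙ₊₁/(n + 1)`. The series `∑ εₙ₊₁/(n + 1)` is an
`L²`-bounded martingale, so it converges almost surely, and since `α < 1` the contraction
coefficients `(1 - α)/(n + 1)` are not summable; a deterministic argument then forces `yₙ → 0`.
-/

open Finset Filter MeasureTheory Topology

theorem tendsto_zero_of_averaging_recursion {c r w : ℕ → ℝ} (hc₀ : ∀ n, 0 ≤ c n)
    (hc₁ : ∀ n, c n ≤ 1) (hc : ¬ Summable c) (hr : Tendsto r atTop (𝓝 0))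
    (hw : ∀ n, w (n + 1) = (1 - c n) * w n + c n * r n) : Tendsto w atTop (𝓝 0) := by
  rw [Metric.tendsto_atTop]
  intro ε hε
  obtain ⟨N, hN⟩ := Metric.tendsto_atTop.1 hr (ε / 2) (half_pos hε)
  have hbound : ∀ m, |w (m + N)| ≤ ε / 2 + |w N| * Real.exp (-∑ k ∈ range m, c (k + N)) := by
    intro m
    induction m with
    | zero => simpa using (half_pos hε).le
    | succ m ih =>
      have hr : |r (m + N)| ≤ ε / 2 := by simpa using (hN (m + N) (by omega)).le
      have hexp := mul_le_mul_of_nonneg_left (Real.add_one_le_exp (-c (m + N)))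
        (mul_nonneg (abs_nonneg (w N)) (Real.exp_pos (-∑ k ∈ range m, c (k + N))).le)
      calc |w (m + 1 + N)| ≤ (1 - c (m + N)) * |w (m + N)| + c (m + N) * |r (m + N)| := by
            rw [Nat.add_right_comm, hw]
            refine (abs_add_le _ _).trans_eq ?_
            rw [abs_mul, abs_mul, abs_of_nonneg (sub_nonneg.2 (hc₁ _)), abs_of_nonneg (hc₀ _)]
        _ ≤ (1 - c (m + N)) * (ε / 2 + |w N| * Real.exp (-∑ k ∈ range m, c (k + N)))
              + c (m + N) * (ε / 2) := by
            gcongr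
            · exact sub_nonneg.2 (hc₁ _)
            · exact hc₀ _
        _ ≤ ε / 2 + |w N| * Real.exp (-∑ k ∈ range (m + 1), c (k + N)) := by
            rw [sum_range_succ, neg_add, Real.exp_add]
            linarith
  have hdecay : Tendsto (fun m => |w N| * Real.exp (-∑ k ∈ range m, c (k + N))) atTop (𝓝 0) := by
    have hdiv := (not_summable_iff_tendsto_nat_atTop_of_nonneg fun k => hc₀ (k + N)).1
      ((summable_nat_add_iff N).not.2 hc)
    simpa using (Real.tendsto_exp_neg_atTop_nhds_zero.comp hdiv).const_mul |w N|
  obtain ⟨M, hM⟩ := (hdecay.eventually (gt_mem_nhds (half_pos hε))).exists_forall_of_atTop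
  refine ⟨M + N, fun n hn => ?_⟩
  obtain ⟨m, rfl⟩ := Nat.exists_eq_add_of_le' (le_trans (by omega) hn : N ≤ n)
  rw [Real.dist_eq, sub_zero]
  linarith [hbound m, hM m (by omega)]

theorem tendsto_zero_of_perturbed_recursion {c v y : ℕ → ℝ} {s : ℝ} (hc₀ : ∀ n, 0 ≤ c n)
    (hc₁ : ∀ n, c n ≤ 1) (hc : ¬ Summable c)
    (hv : Tendsto (fun n => ∑ k ∈ range n, v k) atTop (𝓝 s))
    (hy : ∀ n, y (n + 1) = (1 - c n) * y n + v n) : Tendsto y atTop (𝓝 0) := by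
  set R : ℕ → ℝ := fun n => s - ∑ k ∈ range n, v k
  have hR : Tendsto R atTop (𝓝 0) := by simpa using hv.const_sub s
  -- adding the tail of the series turns the recursion into a weighted average
  have hw : Tendsto (fun n => y n + R n) atTop (𝓝 0) :=
    tendsto_zero_of_averaging_recursion hc₀ hc₁ hc hR fun n => by
      simp only [R, hy, sum_range_succ]
      ring
  simpa using hw.sub hR

theorem not_summable_div_nat_add_two {a : ℝ} (ha : a ≠ 0) :
    ¬ Summable fun k : ℕ => a / (k + 1 + 1 : ℕ) := by
  rw [← summable_mul_left_iff (inv_ne_zero ha)]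
  refine ((summable_nat_add_iff (f := fun n : ℕ => 1 / (n : ℝ)) 2).not.2
    Real.not_summable_one_div_natCast).imp fun h => h.congr fun k => ?_
  field_simp

section MartingaleSeries

variable {Ω : Type*} {m0 : MeasurableSpace Ω} {μ : Measure Ω}

theorem integral_mul_eq_zero_of_condExp_eq_zero {m : MeasurableSpace Ω} (hm : m ≤ m0)
    [SigmaFinite (μ.trim hm)] {f g : Ω → ℝ} (hf : StronglyMeasurable[m] f)
    (hfg : Integrable (f * g) μ) (hg : Integrable g μ) (hg₀ : μ[g|m] =ᵐ[μ] 0) :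
    ∫ ω, f ω * g ω ∂μ = 0 := by
  have hpull : μ[f * g|m] =ᵐ[μ] 0 := by
    filter_upwards [condExp_mul_of_stronglyMeasurable_left hf hfg hg, hg₀] with ω h h₀
    simp [h, h₀]
  calc ∫ ω, f ω * g ω ∂μ = ∫ ω, (μ[f * g|m]) ω ∂μ := (integral_condExp hm).symm
    _ = 0 := by simp [integral_congr_ae hpull]

theorem eLpNorm_one_le_sqrt_integral_sq [IsProbabilityMeasure μ] {f : Ω → ℝ}
    (hf : MemLp f 2 μ) : eLpNorm f 1 μ ≤ ENNReal.ofReal √(∫ ω, f ω ^ 2 ∂μ) := by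
  refine (eLpNorm_le_eLpNorm_of_exponent_le one_le_two hf.1).trans_eq ?_
  rw [hf.eLpNorm_eq_integral_rpow_norm two_ne_zero ENNReal.ofNat_ne_top, Real.sqrt_eq_rpow]
  norm_num [Real.norm_eq_abs]

theorem ae_exists_tendsto_sum_of_condExp_eq_zero [IsProbabilityMeasure μ]
    {ℱ : Filtration ℕ m0} {d : ℕ → Ω → ℝ} {C : ℕ → ℝ}
    (hmeas : ∀ n, StronglyMeasurable[ℱ (n + 1)] (d n)) (hcond : ∀ n, μ[d n|ℱ n] =ᵐ[μ] 0)
    (hbdd : ∀ n ω, |d n ω| ≤ C n) (hC : Summable fun n => C n ^ 2) :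
    ∀ᵐ ω ∂μ, ∃ s, Tendsto (fun n => ∑ k ∈ range n, d k ω) atTop (𝓝 s) := by
  set N : ℕ → Ω → ℝ := fun n ω => ∑ k ∈ range n, d k ω
  have hNmeas : ∀ n, StronglyMeasurable[ℱ n] (N n) := fun n =>
    Finset.stronglyMeasurable_fun_sum _ fun k hk => (hmeas k).mono (ℱ.mono (mem_range.1 hk))
  have hdint : ∀ n, Integrable (d n) μ := fun n =>
    .of_bound ((hmeas n).mono (ℱ.le _)).aestronglyMeasurable (C n) (ae_of_all _ (hbdd n))
  have hNbdd : ∀ n ω, |N n ω| ≤ ∑ k ∈ range n, C k := fun n ω =>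
    (abs_sum_le_sum_abs _ _).trans (sum_le_sum fun k _ => hbdd k ω)
  have hNmem : ∀ n, MemLp (N n) 2 μ := fun n =>
    .of_bound ((hNmeas n).mono (ℱ.le _)).aestronglyMeasurable _ (ae_of_all _ (hNbdd n))
  have hmart : Martingale N ℱ μ :=
    martingale_of_condExp_sub_eq_zero_nat hNmeas (fun n => (hNmem n).integrable one_le_two)
      fun n => by
        rw [show N (n + 1) - N n = d n from funext fun ω => by simp [N, sum_range_succ]]
        exact hcond n
  have hsq : ∀ n, ∫ ω, N n ω ^ 2 ∂μ ≤ ∑ k ∈ range n, C k ^ 2 := by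
    intro n
    induction n with
    | zero => simp [N]
    | succ n ih =>
      have hprod : Integrable (fun ω => N n ω * d n ω) μ :=
        (hdint n).bdd_mul ((hNmeas n).mono (ℱ.le _)).aestronglyMeasurable (ae_of_all _ (hNbdd n))
      have hcross : ∫ ω, N n ω * d n ω ∂μ = 0 :=
        integral_mul_eq_zero_of_condExp_eq_zero (ℱ.le n) (hNmeas n) hprod (hdint n) (hcond n)
      have hdmem : MemLp (d n) 2 μ :=
        .of_bound ((hmeas n).mono (ℱ.le _)).aestronglyMeasurable _ (ae_of_all _ (hbdd n))
      have hd_sq : ∫ ω, d n ω ^ 2 ∂μ ≤ C n ^ 2 := by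
        calc ∫ ω, d n ω ^ 2 ∂μ ≤ ∫ _, C n ^ 2 ∂μ :=
              integral_mono hdmem.integrable_sq (integrable_const _) fun ω =>
                sq_le_sq' (abs_le.1 (hbdd n ω)).1 (abs_le.1 (hbdd n ω)).2
          _ = C n ^ 2 := by simp
      have hexpand : (fun ω => N (n + 1) ω ^ 2)
          = fun ω => N n ω ^ 2 + 2 * (N n ω * d n ω) + d n ω ^ 2 := by
        funext ω
        simp only [N, sum_range_succ]
        ring
      have hfirst : Integrable (fun ω => N n ω ^ 2 + 2 * (N n ω * d n ω)) μ :=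
        (hNmem n).integrable_sq.add (hprod.const_mul 2)
      rw [hexpand, integral_add hfirst hdmem.integrable_sq,
        integral_add (hNmem n).integrable_sq (hprod.const_mul 2), integral_const_mul, hcross,
        sum_range_succ]
      linarith
  have hL1 : ∀ n, eLpNorm (N n) 1 μ ≤ (√(∑' k, C k ^ 2)).toNNReal := by
    intro n
    refine (eLpNorm_one_le_sqrt_integral_sq (hNmem n)).trans ?_
    refine ENNReal.ofReal_le_ofReal (Real.sqrt_le_sqrt ?_)
    exact (hsq n).trans (hC.sum_le_tsum _ fun k _ => sq_nonneg (C k))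
  exact hmart.submartingale.exists_ae_tendsto_of_bdd hL1

end MartingaleSeries

def MeasureTheory.Filtration.shift {Ω : Type*} {m : MeasurableSpace Ω} (ℱ : Filtration ℕ m)
    (k : ℕ) : Filtration ℕ m where
  seq n := ℱ (n + k)
  mono' _ _ h := ℱ.mono (Nat.add_le_add_right h k)
  le' n := ℱ.le (n + k)

namespace ElephantRandomWalk

variable {Ω : Type*} {m0 : MeasurableSpace Ω} {μ : Measure Ω} {ℱ : Filtration ℕ m0}
  {η X : ℕ → Ω → ℝ} {α : ℝ}

theorem abs_le_index (hη : ∀ n, 1 ≤ n → ∀ ω, |η n ω| ≤ 1)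
    (hX : ∀ n ω, X n ω = ∑ k ∈ Icc 1 n, η k ω) (n : ℕ) (ω : Ω) : |X n ω| ≤ n := by
  rw [hX]
  refine (abs_sum_le_sum_abs _ _).trans ?_
  simpa using sum_le_sum fun k hk => hη k (mem_Icc.1 hk).1 ω

theorem stronglyMeasurable (hadapt : ∀ n, 1 ≤ n → StronglyMeasurable[ℱ n] (η n))
    (hX : ∀ n ω, X n ω = ∑ k ∈ Icc 1 n, η k ω) (n : ℕ) : StronglyMeasurable[ℱ n] (X n) := by
  rw [show X n = fun ω => ∑ k ∈ Icc 1 n, η k ω from funext (hX n)]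
  exact Finset.stronglyMeasurable_fun_sum _ fun k hk =>
    (hadapt k (mem_Icc.1 hk).1).mono (ℱ.mono (mem_Icc.1 hk).2)

-- For `1 ≤ n` this is `η (n + 1)` minus its conditional expectation given `ℱ n`.
noncomputable def innovation (η X : ℕ → Ω → ℝ) (α : ℝ) (n : ℕ) (ω : Ω) : ℝ :=
  η (n + 1) ω - α * X n ω / n

theorem abs_innovation_le (hα : |α| ≤ 1) (hη : ∀ n, 1 ≤ n → ∀ ω, |η n ω| ≤ 1)
    (hX : ∀ n ω, X n ω = ∑ k ∈ Icc 1 n, η k ω) (n : ℕ) (ω : Ω) :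
    |innovation η X α n ω| ≤ 2 := by
  have hdrift : |α * X n ω / n| ≤ 1 := by
    rw [abs_div, abs_mul, Nat.abs_cast, mul_div_assoc]
    exact mul_le_one₀ hα (by positivity) (div_le_one_of_le₀ (abs_le_index hη hX n ω) n.cast_nonneg)
  rw [innovation]
  linarith [abs_sub (η (n + 1) ω) (α * X n ω / n), hη (n + 1) (by omega) ω]

theorem sub_div_succ_eq {e : ℕ → ℝ} (hX : ∀ n ω, X n ω = ∑ k ∈ Icc 1 n, η k ω) {n : ℕ}
    (hn : 1 ≤ n) (he : e (n + 1) = (1 + α / n) * e n) (ω : Ω) :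
    (X (n + 1) ω - e (n + 1)) / (n + 1 : ℕ)
      = (1 - (1 - α) / (n + 1 : ℕ)) * ((X n ω - e n) / n)
        + innovation η X α n ω / (n + 1 : ℕ) := by
  have hsucc : X (n + 1) ω = X n ω + η (n + 1) ω := by
    rw [hX, hX, sum_Icc_succ_top (by omega)]
  have hn₀ : (n : ℝ) ≠ 0 := by positivity
  rw [hsucc, he, innovation]
  push_cast
  field_simp
  ring

theorem stronglyMeasurable_innovation (hadapt : ∀ n, 1 ≤ n → StronglyMeasurable[ℱ n] (η n))
    (hX : ∀ n ω, X n ω = ∑ k ∈ Icc 1 n, η k ω) (n : ℕ) :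
    StronglyMeasurable[ℱ (n + 1)] (innovation η X α n) :=
  (hadapt (n + 1) (by omega)).sub ((stronglyMeasurable_const.mul
    ((stronglyMeasurable hadapt hX n).mono (ℱ.mono n.le_succ))).div stronglyMeasurable_const)

variable [IsProbabilityMeasure μ]

theorem integrable_step (hη : ∀ n, 1 ≤ n → ∀ ω, |η n ω| ≤ 1)
    (hadapt : ∀ n, 1 ≤ n → StronglyMeasurable[ℱ n] (η n)) {n : ℕ} (hn : 1 ≤ n) :
    Integrable (η n) μ :=
  .of_bound ((hadapt n hn).mono (ℱ.le n)).aestronglyMeasurable 1 (ae_of_all _ (hη n hn))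

theorem integrable (hη : ∀ n, 1 ≤ n → ∀ ω, |η n ω| ≤ 1)
    (hadapt : ∀ n, 1 ≤ n → StronglyMeasurable[ℱ n] (η n))
    (hX : ∀ n ω, X n ω = ∑ k ∈ Icc 1 n, η k ω) (n : ℕ) : Integrable (X n) μ :=
  .of_bound ((stronglyMeasurable hadapt hX n).mono (ℱ.le n)).aestronglyMeasurable n
    (ae_of_all _ (abs_le_index hη hX n))

theorem integral_succ (hη : ∀ n, 1 ≤ n → ∀ ω, |η n ω| ≤ 1)
    (hadapt : ∀ n, 1 ≤ n → StronglyMeasurable[ℱ n] (η n))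
    (hcond : ∀ n, 1 ≤ n → μ[η (n + 1)|ℱ n] =ᵐ[μ] fun ω => α * X n ω / n)
    (hX : ∀ n ω, X n ω = ∑ k ∈ Icc 1 n, η k ω) {n : ℕ} (hn : 1 ≤ n) :
    ∫ ω, X (n + 1) ω ∂μ = (1 + α / n) * ∫ ω, X n ω ∂μ := by
  have hstep : ∫ ω, η (n + 1) ω ∂μ = α / n * ∫ ω, X n ω ∂μ := by
    rw [← integral_condExp (ℱ.le n), integral_congr_ae (hcond n hn), ← integral_const_mul]
    simp only [mul_div_right_comm]
  have hsucc : ∀ ω, X (n + 1) ω = X n ω + η (n + 1) ω := fun ω => by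
    rw [hX, hX, sum_Icc_succ_top (by omega)]
  simp_rw [hsucc]
  rw [integral_add (integrable hη hadapt hX n) (integrable_step hη hadapt (by omega)), hstep]
  ring

theorem condExp_innovation (hη : ∀ n, 1 ≤ n → ∀ ω, |η n ω| ≤ 1)
    (hadapt : ∀ n, 1 ≤ n → StronglyMeasurable[ℱ n] (η n))
    (hcond : ∀ n, 1 ≤ n → μ[η (n + 1)|ℱ n] =ᵐ[μ] fun ω => α * X n ω / n)
    (hX : ∀ n ω, X n ω = ∑ k ∈ Icc 1 n, η k ω) {n : ℕ} (hn : 1 ≤ n) :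
    μ[innovation η X α n|ℱ n] =ᵐ[μ] 0 := by
  have hint : Integrable (fun ω => α * X n ω / n) μ :=
    ((integrable hη hadapt hX n).const_mul α).div_const _
  have hpred : μ[fun ω => α * X n ω / n|ℱ n] = fun ω => α * X n ω / n :=
    condExp_of_stronglyMeasurable (ℱ.le n)
      ((stronglyMeasurable_const.mul (stronglyMeasurable hadapt hX n)).div stronglyMeasurable_const)
      hint
  rw [show innovation η X α n = η (n + 1) - fun ω => α * X n ω / n from rfl]
  filter_upwards [condExp_sub (integrable_step hη hadapt (by omega : 1 ≤ n + 1)) hint (ℱ n),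
    hcond n hn] with ω h h'
  simp [h, h', hpred]

theorem ae_exists_tendsto_sum_innovation (hα : |α| ≤ 1) (hη : ∀ n, 1 ≤ n → ∀ ω, |η n ω| ≤ 1)
    (hadapt : ∀ n, 1 ≤ n → StronglyMeasurable[ℱ n] (η n))
    (hcond : ∀ n, 1 ≤ n → μ[η (n + 1)|ℱ n] =ᵐ[μ] fun ω => α * X n ω / n)
    (hX : ∀ n ω, X n ω = ∑ k ∈ Icc 1 n, η k ω) :
    ∀ᵐ ω ∂μ, ∃ s, Tendsto
      (fun n => ∑ k ∈ range n, innovation η X α (k + 1) ω / (k + 1 + 1 : ℕ)) atTop (𝓝 s) := by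
  refine ae_exists_tendsto_sum_of_condExp_eq_zero (ℱ := ℱ.shift 1)
    (C := fun k => 2 / (k + 1 + 1 : ℕ)) (fun k => ?_) (fun k => ?_) (fun k ω => ?_) ?_
  · exact (stronglyMeasurable_innovation hadapt hX (k + 1)).div stronglyMeasurable_const
  · have hsmul : (fun ω => innovation η X α (k + 1) ω / (k + 1 + 1 : ℕ))
        = ((k + 1 + 1 : ℕ) : ℝ)⁻¹ • innovation η X α (k + 1) :=
      funext fun ω => by rw [Pi.smul_apply, smul_eq_mul, div_eq_inv_mul]
    rw [hsmul]
    exact (condExp_smul _ _ _).trans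
      ((condExp_innovation hη hadapt hcond hX (by omega : 1 ≤ k + 1)).mono
        fun ω (h : μ[innovation η X α (k + 1)|ℱ.shift 1 k] ω = 0) => by simp [h])
  · rw [abs_div, Nat.abs_cast]
    exact div_le_div_of_nonneg_right (abs_innovation_le hα hη hX _ ω) (Nat.cast_nonneg _)
  · exact (((summable_nat_add_iff (f := fun n : ℕ => 1 / (n : ℝ) ^ 2) 2).2
      (Real.summable_one_div_nat_pow.2 one_lt_two)).mul_left 4).congr fun k => by
        field_simp
        norm_num

end ElephantRandomWalk

theorem stmt11_general {Ω : Type*} {m0 : MeasurableSpace Ω} (μ : Measure Ω) [IsProbabilityMeasure μ]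
    (ℱ : Filtration ℕ m0) (p : ℝ) (hp0 : 0 ≤ p) (hp1 : p < 1)
    (η : ℕ → Ω → ℝ)
    (hval : ∀ n, 1 ≤ n → ∀ ω, η n ω = 1 ∨ η n ω = -1)
    (hadapt : ∀ n, 1 ≤ n → StronglyMeasurable[ℱ n] (η n))
    (hcond : ∀ n, 1 ≤ n →
      μ[η (n + 1) | ℱ n] =ᵐ[μ] fun ω => (2 * p - 1) * (∑ k ∈ Finset.Icc 1 n, η k ω) / n)
    (X : ℕ → Ω → ℝ) (hX : ∀ n ω, X n ω = ∑ k ∈ Finset.Icc 1 n, η k ω) :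
    ∀ᵐ ω ∂μ, Tendsto (fun n : ℕ => (X n ω - ∫ x, X n x ∂μ) / n) atTop (nhds 0) := by
  set α := 2 * p - 1
  have hη : ∀ n, 1 ≤ n → ∀ ω, |η n ω| ≤ 1 := fun n hn ω => by
    rcases hval n hn ω with h | h <;> simp [h]
  have hcond' : ∀ n, 1 ≤ n → μ[η (n + 1)|ℱ n] =ᵐ[μ] fun ω => α * X n ω / n := by
    simpa only [← hX] using hcond
  filter_upwards [ElephantRandomWalk.ae_exists_tendsto_sum_innovation
    (abs_le.2 ⟨by linarith, by linarith⟩) hη hadapt hcond' hX] with ω ⟨s, hs⟩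
  rw [← tendsto_add_atTop_iff_nat 1]
  refine tendsto_zero_of_perturbed_recursion (fun k => ?_) (fun k => ?_)
    (not_summable_div_nat_add_two (by linarith)) hs fun k =>
    ElephantRandomWalk.sub_div_succ_eq (e := fun n => ∫ x, X n x ∂μ) (n := k + 1) hX (by omega)
      (ElephantRandomWalk.integral_succ hη hadapt hcond' hX (by omega)) ω
  · exact div_nonneg (by linarith) (by positivity)
  · rw [div_le_one (by positivity)]
    push_cast
    linarith

theorem stmt11 {Ω : Type*} {m0 : MeasurableSpace Ω} (μ : Measure Ω) [IsProbabilityMeasure μ]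
    (ℱ : Filtration ℕ m0) (p q : ℝ) (hp0 : 0 ≤ p) (hp1 : p < 1) (hq : q ∈ Set.Icc (0 : ℝ) 1)
    (η : ℕ → Ω → ℝ)
    (hval : ∀ n, 1 ≤ n → ∀ ω, η n ω = 1 ∨ η n ω = -1)
    (hadapt : ∀ n, 1 ≤ n → StronglyMeasurable[ℱ n] (η n))
    (hη1 : ∫ ω, η 1 ω ∂μ = 2 * q - 1)
    (hcond : ∀ n, 1 ≤ n →
      μ[η (n + 1) | ℱ n] =ᵐ[μ] fun ω => (2 * p - 1) * (∑ k ∈ Finset.Icc 1 n, η k ω) / n)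
    (X : ℕ → Ω → ℝ) (hX : ∀ n ω, X n ω = ∑ k ∈ Finset.Icc 1 n, η k ω) :
    ∀ᵐ ω ∂μ, Tendsto (fun n : ℕ => (X n ω - ∫ x, X n x ∂μ) / n) atTop (nhds 0) :=
  stmt11_general μ ℱ p hp0 hp1 η hval hadapt hcond X hX
end

section
/- For the symmetric elephant random walk (q = 1/2), the auxiliary sequence H_k = (n+k-1) E[\eta_{n+k} X_n] satisfies the recursion H_{k+1} = (1 + (2p-1)/(n+k-1)) H_k with H_1 = (2p-1) E[X_n^2], and consequently H_k = ((n-1)! \Gamma(2p+n+k-2) / ((n+k-2)! \Gamma(2p-1+n))) H_1 for all k \ge 1. -/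
/-!
Pulling the `ℱ m`-measurable factor `X n` out of the conditional expectation of `η (m + 1)`
gives `E[η (m + 1) X n] = (2p - 1) / m · E[X m X n]` for `m ≥ n`, hence
`H k = (2p - 1) E[X (n + k - 1) X n]`. Splitting `X (n + k) = X (n + k - 1) + η (n + k)` then
yields the recursion, whose factors `(2p - 1 + n + k - 1) / (n + k - 1)` telescope into a ratio of
Gamma values and factorials via `Γ (x + 1) = x Γ x`.
-/

open Finset MeasureTheory
open scoped Nat

theorem integral_mul_eq_of_condExp_ae_eq {Ω : Type*} {m m0 : MeasurableSpace Ω} {μ : Measure Ω}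
    (hm : m ≤ m0) [SigmaFinite (μ.trim hm)] {f g h : Ω → ℝ} (hg : StronglyMeasurable[m] g)
    (hfg : Integrable (f * g) μ) (hf : Integrable f μ) (hcond : μ[f | m] =ᵐ[μ] h) :
    ∫ ω, f ω * g ω ∂μ = ∫ ω, h ω * g ω ∂μ := by
  rw [← integral_condExp hm]
  refine integral_congr_ae ?_
  filter_upwards [condExp_mul_of_stronglyMeasurable_right hg hfg hf, hcond] with ω hfg hf
  exact hfg.trans (congrArg (· * g ω) hf)

theorem integrable_mul_of_abs_le {Ω : Type*} {m0 : MeasurableSpace Ω} {μ : Measure Ω}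
    [IsFiniteMeasure μ] {f g : Ω → ℝ} {a b : ℝ} (hf : AEStronglyMeasurable f μ)
    (hg : AEStronglyMeasurable g μ) (hfa : ∀ ω, |f ω| ≤ a) (hgb : ∀ ω, |g ω| ≤ b) :
    Integrable (f * g) μ :=
  (Integrable.of_bound hg b (.of_forall hgb)).bdd_mul hf (.of_forall hfa)

theorem eq_gamma_ratio_mul_of_rec {a : ℝ} {n : ℕ} (hn : 1 ≤ n) (ha : 0 < a + n)
    {H : ℕ → ℝ}
    (hrec : ∀ k, 1 ≤ k → H (k + 1) = (1 + a / ((n : ℝ) + k - 1)) * H k) :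
    ∀ k, 1 ≤ k → H k = ((n - 1)! : ℝ) * Real.Gamma (a + n + k - 1) /
      (((n + k - 2)! : ℝ) * Real.Gamma (a + n)) * H 1 := by
  have hΓ : Real.Gamma (a + n) ≠ 0 := (Real.Gamma_pos_of_pos ha).ne'
  intro k hk
  induction k, hk using Nat.le_induction with
  | base =>
    rw [show n + 1 - 2 = n - 1 by omega, Nat.cast_one, add_sub_cancel_right,
      div_self (by positivity), one_mul]
  | succ k hk ih =>
    have hk' : (1 : ℝ) ≤ k := by exact_mod_cast hk
    have hn' : (1 : ℝ) ≤ n := by exact_mod_cast hn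
    have hΓ_succ : Real.Gamma (a + n + (k + 1 : ℕ) - 1) =
        (a + n + k - 1) * Real.Gamma (a + n + k - 1) := by
      rw [Nat.cast_succ, show a + n + (k + 1) - 1 = (a + n + k - 1) + 1 by ring]
      exact Real.Gamma_add_one (by linarith)
    have hfact_succ : ((n + (k + 1) - 2)! : ℝ) = ((n : ℝ) + k - 1) * (n + k - 2)! := by
      rw [show n + (k + 1) - 2 = (n + k - 2) + 1 by omega, Nat.factorial_succ]
      push_cast [Nat.cast_sub (show 2 ≤ n + k by omega)]
      ring
    have : (n : ℝ) + k - 1 ≠ 0 := by linarith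
    rw [hrec k hk, ih, hΓ_succ, hfact_succ]
    field_simp
    ring

section PartialSums

variable {Ω : Type*} {m0 : MeasurableSpace Ω} {μ : Measure Ω} {ℱ : Filtration ℕ m0}
  {η X : ℕ → Ω → ℝ}

theorem stronglyMeasurable_partialSum
    (hadapt : ∀ k, 1 ≤ k → StronglyMeasurable[ℱ k] (η k))
    (hX : ∀ m ω, X m ω = ∑ k ∈ Icc 1 m, η k ω) (m : ℕ) :
    StronglyMeasurable[ℱ m] (X m) := by
  rw [funext (hX m)]
  exact Finset.stronglyMeasurable_fun_sum _ fun k hk =>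
    (hadapt k (mem_Icc.mp hk).1).mono (ℱ.mono (mem_Icc.mp hk).2)

theorem aestronglyMeasurable_partialSum
    (hadapt : ∀ k, 1 ≤ k → StronglyMeasurable[ℱ k] (η k))
    (hX : ∀ m ω, X m ω = ∑ k ∈ Icc 1 m, η k ω) (m : ℕ) :
    AEStronglyMeasurable (X m) μ :=
  ((stronglyMeasurable_partialSum hadapt hX m).mono (ℱ.le m)).aestronglyMeasurable

theorem abs_partialSum_le (hbnd : ∀ k, 1 ≤ k → ∀ ω, |η k ω| ≤ 1)
    (hX : ∀ m ω, X m ω = ∑ k ∈ Icc 1 m, η k ω) (m : ℕ) (ω : Ω) : |X m ω| ≤ m := by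
  rw [hX]
  calc |∑ k ∈ Icc 1 m, η k ω| ≤ ∑ k ∈ Icc 1 m, |η k ω| := abs_sum_le_sum_abs _ _
    _ ≤ ∑ k ∈ Icc 1 m, 1 := sum_le_sum fun k hk => hbnd k (mem_Icc.mp hk).1 ω
    _ = m := by simp

theorem partialSum_succ (hX : ∀ m ω, X m ω = ∑ k ∈ Icc 1 m, η k ω) (m : ℕ) (ω : Ω) :
    X (m + 1) ω = X m ω + η (m + 1) ω := by
  rw [hX, hX, sum_Icc_succ_top (by omega)]

variable [IsProbabilityMeasure μ] (hadapt : ∀ k, 1 ≤ k → StronglyMeasurable[ℱ k] (η k))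
  (hbnd : ∀ k, 1 ≤ k → ∀ ω, |η k ω| ≤ 1)
  (hX : ∀ m ω, X m ω = ∑ k ∈ Icc 1 m, η k ω)
include hadapt hbnd hX

theorem integrable_step_mul_partialSum (k n : ℕ) (hk : 1 ≤ k) :
    Integrable (fun ω => η k ω * X n ω) μ :=
  integrable_mul_of_abs_le ((hadapt k hk).mono (ℱ.le k)).aestronglyMeasurable
    (aestronglyMeasurable_partialSum hadapt hX n) (hbnd k hk) (abs_partialSum_le hbnd hX n)

theorem integrable_partialSum_mul_partialSum (m n : ℕ) :
    Integrable (fun ω => X m ω * X n ω) μ :=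
  integrable_mul_of_abs_le (aestronglyMeasurable_partialSum hadapt hX m)
    (aestronglyMeasurable_partialSum hadapt hX n)
    (abs_partialSum_le hbnd hX m) (abs_partialSum_le hbnd hX n)

theorem integral_partialSum_succ_mul (m n : ℕ) :
    ∫ ω, X (m + 1) ω * X n ω ∂μ =
      ∫ ω, X m ω * X n ω ∂μ + ∫ ω, η (m + 1) ω * X n ω ∂μ := by
  rw [← integral_add (integrable_partialSum_mul_partialSum hadapt hbnd hX m n)
    (integrable_step_mul_partialSum hadapt hbnd hX (m + 1) n (by omega))]
  simp only [partialSum_succ hX, add_mul]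

theorem integral_step_mul_partialSum {a : ℝ} {m n : ℕ} (hnm : n ≤ m)
    (hcond : μ[η (m + 1) | ℱ m] =ᵐ[μ] fun ω => a * (∑ k ∈ Icc 1 m, η k ω) / m) :
    ∫ ω, η (m + 1) ω * X n ω ∂μ = a / m * ∫ ω, X m ω * X n ω ∂μ := by
  rw [integral_mul_eq_of_condExp_ae_eq (ℱ.le m)
    ((stronglyMeasurable_partialSum hadapt hX n).mono (ℱ.mono hnm))
    (integrable_step_mul_partialSum hadapt hbnd hX (m + 1) n (by omega))
    (Integrable.of_bound ((hadapt _ (by omega)).mono (ℱ.le _)).aestronglyMeasurable 1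
      (.of_forall (hbnd _ (by omega)))) hcond, ← integral_const_mul]
  simp only [← hX]
  congr 1 with ω
  ring

end PartialSums

theorem stmt17_general {Ω : Type*} {m0 : MeasurableSpace Ω} (μ : Measure Ω) [IsProbabilityMeasure μ]
    (ℱ : Filtration ℕ m0) (p : ℝ) (hp : p ∈ Set.Ioo (0 : ℝ) 1)
    (η : ℕ → Ω → ℝ)
    (hval : ∀ n, 1 ≤ n → ∀ ω, η n ω = 1 ∨ η n ω = -1)
    (hadapt : ∀ n, 1 ≤ n → StronglyMeasurable[ℱ n] (η n))
    (hcond : ∀ m, 1 ≤ m →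
      μ[η (m + 1) | ℱ m] =ᵐ[μ] fun ω => (2 * p - 1) * (∑ k ∈ Finset.Icc 1 m, η k ω) / m)
    (X : ℕ → Ω → ℝ) (hX : ∀ m ω, X m ω = ∑ k ∈ Finset.Icc 1 m, η k ω)
    (n : ℕ) (hn : 1 ≤ n) (H : ℕ → ℝ)
    (hH : ∀ k, 1 ≤ k → H k = ((n : ℝ) + k - 1) * ∫ ω, η (n + k) ω * X n ω ∂μ) :
    H 1 = (2 * p - 1) * ∫ ω, (X n ω) ^ 2 ∂μ ∧
    (∀ k, 1 ≤ k → H (k + 1) = (1 + (2 * p - 1) / ((n : ℝ) + k - 1)) * H k) ∧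
    (∀ k, 1 ≤ k →
      H k = ((Nat.factorial (n - 1) : ℝ) * Real.Gamma (2 * p + n + k - 2) /
              ((Nat.factorial (n + k - 2) : ℝ) * Real.Gamma (2 * p - 1 + n))) * H 1) := by
  have hbnd : ∀ k, 1 ≤ k → ∀ ω, |η k ω| ≤ 1 := fun k hk ω => by
    rcases hval k hk ω with h | h <;> simp [h]
  have hstep (j : ℕ) : ∫ ω, η (n + j + 1) ω * X n ω ∂μ =
      (2 * p - 1) / ((n : ℝ) + j) * ∫ ω, X (n + j) ω * X n ω ∂μ := by
    rw [integral_step_mul_partialSum hadapt hbnd hX (by omega) (hcond _ (by omega)),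
      Nat.cast_add]
  have hH_succ (j : ℕ) : H (j + 1) = (2 * p - 1) * ∫ ω, X (n + j) ω * X n ω ∂μ := by
    have : (0 : ℝ) < n + j := by positivity
    rw [hH _ (by omega), ← add_assoc, hstep, Nat.cast_succ]
    field_simp
    ring
  have hrec : ∀ k, 1 ≤ k → H (k + 1) = (1 + (2 * p - 1) / ((n : ℝ) + k - 1)) * H k := by
    intro k hk
    obtain ⟨j, rfl⟩ : ∃ j, k = j + 1 := ⟨k - 1, by omega⟩
    have : (0 : ℝ) < n + j := by positivity
    rw [hH_succ (j + 1), hH_succ j, ← add_assoc, integral_partialSum_succ_mul hadapt hbnd hX,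
      hstep, Nat.cast_succ, show (n : ℝ) + (j + 1) - 1 = n + j by ring]
    field_simp
  refine ⟨by simpa [sq] using hH_succ 0, hrec, ?_⟩
  have hn' : (1 : ℝ) ≤ n := by exact_mod_cast hn
  convert eq_gamma_ratio_mul_of_rec hn (by linarith [hp.1]) hrec using 7
  ring

theorem stmt17 {Ω : Type*} {m0 : MeasurableSpace Ω} (μ : Measure Ω) [IsProbabilityMeasure μ]
    (ℱ : Filtration ℕ m0) (p : ℝ) (hp : p ∈ Set.Ioo (0 : ℝ) 1)
    (η : ℕ → Ω → ℝ)
    (hval : ∀ n, 1 ≤ n → ∀ ω, η n ω = 1 ∨ η n ω = -1)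
    (hadapt : ∀ n, 1 ≤ n → StronglyMeasurable[ℱ n] (η n))
    (hη1 : ∫ ω, η 1 ω ∂μ = 0)
    (hcond : ∀ m, 1 ≤ m →
      μ[η (m + 1) | ℱ m] =ᵐ[μ] fun ω => (2 * p - 1) * (∑ k ∈ Finset.Icc 1 m, η k ω) / m)
    (X : ℕ → Ω → ℝ) (hX : ∀ m ω, X m ω = ∑ k ∈ Finset.Icc 1 m, η k ω)
    (n : ℕ) (hn : 1 ≤ n) (H : ℕ → ℝ)
    (hH : ∀ k, 1 ≤ k → H k = ((n : ℝ) + k - 1) * ∫ ω, η (n + k) ω * X n ω ∂μ) :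
    H 1 = (2 * p - 1) * ∫ ω, (X n ω) ^ 2 ∂μ ∧
    (∀ k, 1 ≤ k → H (k + 1) = (1 + (2 * p - 1) / ((n : ℝ) + k - 1)) * H k) ∧
    (∀ k, 1 ≤ k →
      H k = ((Nat.factorial (n - 1) : ℝ) * Real.Gamma (2 * p + n + k - 2) /
              ((Nat.factorial (n + k - 2) : ℝ) * Real.Gamma (2 * p - 1 + n))) * H 1) :=
  stmt17_general μ ℱ p hp η hval hadapt hcond X hX n hn H hH
end
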